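/- arXiv:2509.17504 — 3 statements merged into one kernel-verified Lean document; each statement's English description precedes it below -/
import Mathlib

section
/- For real p ≥ 7 and a > 0, the ratio (∫₀^∞ w·(w/(w+a))²·w^{p/2-4} e^{-w/2} dw) / (∫₀^∞ (w/(w+a))²·w^{p/2-4} e^{-w/2} dw) is at least (∫₀^∞ w^{p/2-3} e^{-w/2} dw)/(∫₀^∞ w^{p/2-4} e^{-w/2} dw) = p - 6. -/
/-!
Write `φ(w) = w^(p/2-4) e^(-w/2)` and `g(w) = (w/(w+a))²`. The Gamma recursion
`Γ(s+2) = (s+1) Γ(s+1)` says that the mean of `w` under the weight `φ` is `c = p - 6`.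
Since `g` is nondecreasing, `(w - c)(g w - g c) ≥ 0`; integrating against `φ` gives
`∫ w g φ - c ∫ g φ ≥ g c (∫ w φ - c ∫ φ) = 0`.
-/

open MeasureTheory Set Real

theorem setIntegral_pos_of_forall_pos {X : Type*} [MeasurableSpace X] {μ : Measure X} {s : Set X}
    {f : X → ℝ} (hs : MeasurableSet s) (hμs : μ s ≠ 0) (hf : ∀ x ∈ s, 0 < f x)
    (hfi : IntegrableOn f s μ) : 0 < ∫ x in s, f x ∂μ := by
  rw [setIntegral_pos_iff_support_of_nonneg_ae
      (ae_restrict_of_forall_mem hs fun x hx => (hf x hx).le) hfi,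
    inter_eq_right.2 fun x hx => Function.mem_support.2 (hf x hx).ne']
  exact pos_iff_ne_zero.2 hμs

section Covariance

variable {μ : Measure ℝ} {S : Set ℝ} {φ g : ℝ → ℝ} {c C : ℝ}

theorem mul_setIntegral_le_setIntegral_mul_of_monotoneOn (hS : MeasurableSet S) (hc : c ∈ S)
    (hg : MonotoneOn g S) (hgm : AEStronglyMeasurable g (μ.restrict S))
    (hgC : ∀ x ∈ S, ‖g x‖ ≤ C) (hφ : ∀ x ∈ S, 0 ≤ φ x) (hφi : IntegrableOn φ S μ)
    (hxφi : IntegrableOn (fun x => x * φ x) S μ)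
    (hmean : ∫ x in S, x * φ x ∂μ = c * ∫ x in S, φ x ∂μ) :
    c * ∫ x in S, g x * φ x ∂μ ≤ ∫ x in S, x * (g x * φ x) ∂μ := by
  have hgC' : ∀ᵐ x ∂μ.restrict S, ‖g x‖ ≤ C := ae_restrict_of_forall_mem hS hgC
  have hgφi : IntegrableOn (fun x => g x * φ x) S μ := hφi.bdd_mul hgm hgC'
  have hxgφi : IntegrableOn (fun x => x * (g x * φ x)) S μ :=
    (hxφi.bdd_mul hgm hgC').congr (ae_of_all _ fun x => by ring)
  have hpointwise : ∀ x ∈ S,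
      g c * (x * φ x - c * φ x) ≤ x * (g x * φ x) - c * (g x * φ x) := by
    intro x hx
    have hsign : 0 ≤ (x - c) * (g x - g c) := by
      rcases le_total c x with h | h
      · exact mul_nonneg (sub_nonneg.2 h) (sub_nonneg.2 (hg hc hx h))
      · exact mul_nonneg_of_nonpos_of_nonpos (sub_nonpos.2 h) (sub_nonpos.2 (hg hx hc h))
    nlinarith [mul_nonneg hsign (hφ x hx)]
  have hint : ∫ x in S, g c * (x * φ x - c * φ x) ∂μ ≤
      ∫ x in S, (x * (g x * φ x) - c * (g x * φ x)) ∂μ :=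
    setIntegral_mono_on ((hxφi.sub (hφi.const_mul c)).const_mul (g c))
      (hxgφi.sub (hgφi.const_mul c)) hS hpointwise
  rw [integral_const_mul, integral_sub hxφi (hφi.const_mul c), integral_const_mul, hmean,
    sub_self, mul_zero, integral_sub hxgφi (hgφi.const_mul c), integral_const_mul] at hint
  linarith

end Covariance

section GammaWeight

variable {s : ℝ}

theorem integrableOn_rpow_mul_exp_neg_half (hs : -1 < s) :
    IntegrableOn (fun w : ℝ => w ^ s * exp (-w / 2)) (Ioi 0) :=
  (integrableOn_rpow_mul_exp_neg_mul_rpow hs zero_lt_one (by norm_num : (0 : ℝ) < 1 / 2)).congr_fun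
    (fun w _ => by simp only [rpow_one]; ring_nf) measurableSet_Ioi

theorem integral_rpow_mul_exp_neg_half (hs : -1 < s) :
    ∫ w in Ioi (0 : ℝ), w ^ s * exp (-w / 2) = 2 ^ (s + 1) * Gamma (s + 1) := by
  have h := integral_rpow_mul_exp_neg_mul_Ioi (a := s + 1) (r := 1 / 2) (by linarith) one_half_pos
  rw [add_sub_cancel_right] at h
  rw [show ∫ w in Ioi (0 : ℝ), w ^ s * exp (-w / 2) = ∫ t in Ioi (0 : ℝ), t ^ s * exp (-(1 / 2 * t))
      from setIntegral_congr_fun measurableSet_Ioi fun w _ => by ring_nf, h]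
  norm_num

theorem integral_rpow_mul_exp_neg_half_pos (hs : -1 < s) :
    0 < ∫ w in Ioi (0 : ℝ), w ^ s * exp (-w / 2) := by
  rw [integral_rpow_mul_exp_neg_half hs]
  have := Gamma_pos_of_pos (show 0 < s + 1 by linarith)
  positivity

theorem integral_rpow_add_one_mul_exp_neg_half (hs : -1 < s) :
    ∫ w in Ioi (0 : ℝ), w ^ (s + 1) * exp (-w / 2) =
      2 * (s + 1) * ∫ w in Ioi (0 : ℝ), w ^ s * exp (-w / 2) := by
  rw [integral_rpow_mul_exp_neg_half (by linarith), integral_rpow_mul_exp_neg_half hs,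
    Gamma_add_one (by linarith), rpow_add_one two_ne_zero]
  ring

theorem eqOn_mul_rpow_mul_exp_neg_half (s : ℝ) :
    EqOn (fun w : ℝ => w * (w ^ s * exp (-w / 2))) (fun w => w ^ (s + 1) * exp (-w / 2))
      (Ioi 0) := fun w hw => by
  simp only [rpow_add_one (ne_of_gt hw)]
  ring

end GammaWeight

section SquaredRatio

variable {a : ℝ}

theorem monotoneOn_div_add_sq (ha : 0 ≤ a) :
    MonotoneOn (fun w : ℝ => (w / (w + a)) ^ 2) (Ioi 0) := by
  intro x hx y hy hxy
  have hx : 0 < x := hx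
  apply pow_le_pow_left₀ (by positivity)
  rw [div_le_div_iff₀ (by positivity) (by linarith)]
  nlinarith

theorem norm_div_add_sq_le_one (ha : 0 ≤ a) {w : ℝ} (hw : 0 < w) :
    ‖(w / (w + a)) ^ 2‖ ≤ 1 := by
  rw [norm_pow, norm_div, Real.norm_of_nonneg hw.le, Real.norm_of_nonneg (by linarith)]
  exact pow_le_one₀ (by positivity) ((div_le_one (by linarith)).2 (by linarith))

end SquaredRatio

theorem stmt_8 (p : ℝ) (hp : 7 ≤ p) (a : ℝ) (ha : 0 < a) :
    (∫ w in Set.Ioi (0 : ℝ),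
        w * (w / (w + a)) ^ 2 * w ^ (p / 2 - 4) * Real.exp (-w / 2)) /
      (∫ w in Set.Ioi (0 : ℝ),
        (w / (w + a)) ^ 2 * w ^ (p / 2 - 4) * Real.exp (-w / 2)) ≥
      (∫ w in Set.Ioi (0 : ℝ), w ^ (p / 2 - 3) * Real.exp (-w / 2)) /
        (∫ w in Set.Ioi (0 : ℝ), w ^ (p / 2 - 4) * Real.exp (-w / 2)) ∧
    (∫ w in Set.Ioi (0 : ℝ), w ^ (p / 2 - 3) * Real.exp (-w / 2)) /
      (∫ w in Set.Ioi (0 : ℝ), w ^ (p / 2 - 4) * Real.exp (-w / 2)) = p - 6 := by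
  have hs : -1 < p / 2 - 4 := by linarith
  have hshift : p / 2 - 3 = p / 2 - 4 + 1 := by ring
  have hmean : (∫ w in Ioi (0 : ℝ), w ^ (p / 2 - 3) * exp (-w / 2)) =
      (p - 6) * ∫ w in Ioi (0 : ℝ), w ^ (p / 2 - 4) * exp (-w / 2) := by
    rw [hshift, integral_rpow_add_one_mul_exp_neg_half hs]
    ring
  have hratio : (∫ w in Ioi (0 : ℝ), w ^ (p / 2 - 3) * exp (-w / 2)) /
      (∫ w in Ioi (0 : ℝ), w ^ (p / 2 - 4) * exp (-w / 2)) = p - 6 := by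
    rw [hmean, mul_div_assoc, div_self (integral_rpow_mul_exp_neg_half_pos hs).ne', mul_one]
  refine ⟨?_, hratio⟩
  have hweight := integrableOn_rpow_mul_exp_neg_half hs
  have hmeas : AEStronglyMeasurable (fun w : ℝ => (w / (w + a)) ^ 2) (volume.restrict (Ioi 0)) :=
    (by fun_prop : Measurable fun w : ℝ => (w / (w + a)) ^ 2).aestronglyMeasurable
  have hcov := mul_setIntegral_le_setIntegral_mul_of_monotoneOn measurableSet_Ioi
    (show p - 6 ∈ Ioi (0 : ℝ) by simp only [mem_Ioi]; linarith) (monotoneOn_div_add_sq ha.le)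
    hmeas (fun w hw => norm_div_add_sq_le_one ha.le hw)
    (fun w (hw : 0 < w) => by positivity) hweight
    ((integrableOn_rpow_mul_exp_neg_half (by linarith)).congr_fun
      (eqOn_mul_rpow_mul_exp_neg_half _).symm measurableSet_Ioi)
    ((setIntegral_congr_fun measurableSet_Ioi (eqOn_mul_rpow_mul_exp_neg_half _)).trans
      (hshift ▸ hmean))
  have hpos := setIntegral_pos_of_forall_pos measurableSet_Ioi (by simp)
    (fun w (hw : 0 < w) => by positivity)
    (hweight.bdd_mul hmeas
      (ae_restrict_of_forall_mem measurableSet_Ioi fun w hw => norm_div_add_sq_le_one ha.le hw))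
  simp only [← mul_assoc] at hcov hpos
  rw [hratio, ge_iff_le, le_div_iff₀ hpos]
  linarith
end

section
/- Let p ≥ 3, Φ : (0,∞) → (0,∞) continuous with G(w) = ∫₀^w Φ(t)/t dt finite, and suppose Φ(w)/G(w) ≤ β for all w > 0 with β ≤ p - 2. Then the function f(w) = w^{1/2}·((G(w) + 1/(p-2))/(G(w) + 1/(p-1)))² is monotone nondecreasing on (0,∞). -/
/-!
Since `G' = Φ / w`, the derivative of `√w · ((G + a) / (G + b))²` is
`(G + a) / (G + b) / (2√w) · ((G + a)(G + b) - 4(a - b)Φ) / (G + b)²`, so the function is monotone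
as soon as `4(a - b)Φ ≤ (G + a)(G + b)`. For `a = 1/q`, `b = 1/(q + 1)` with `q = p - 2` this reads
`4Φ ≤ (qG + 1)((q + 1)G + 1)`, which follows from `Φ ≤ βG ≤ qG` and `(qG + 1)² ≥ 4qG`.
-/

open MeasureTheory Set

theorem hasDerivAt_integral_div_self {Φ : ℝ → ℝ} (hcont : ContinuousOn Φ (Ioi 0)) {x : ℝ}
    (hx : 0 < x) (hint : IntervalIntegrable (fun t => Φ t / t) volume 0 x) :
    HasDerivAt (fun w => ∫ t in (0 : ℝ)..w, Φ t / t) (Φ x / x) x := by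
  have hc : ContinuousOn (fun t => Φ t / t) (Ioi 0) :=
    hcont.div continuousOn_id fun t ht => ne_of_gt ht
  exact intervalIntegral.integral_hasDerivAt_right hint
    (hc.stronglyMeasurableAtFilter isOpen_Ioi x hx) (hc.continuousAt (isOpen_Ioi.mem_nhds hx))

theorem four_mul_inv_sub_inv_succ_mul_le {q g φ : ℝ} (hq : 0 < q) (hg : 0 ≤ g) (hφ : φ ≤ q * g) :
    4 * (1 / q - 1 / (q + 1)) * φ ≤ (g + 1 / q) * (g + 1 / (q + 1)) := by
  have key : 4 * φ ≤ (q * g + 1) * ((q + 1) * g + 1) := by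
    nlinarith [sq_nonneg (q * g - 1), mul_nonneg hq.le hg]
  have e1 : 4 * (1 / q - 1 / (q + 1)) * φ = 4 * φ / (q * (q + 1)) := by field_simp; ring
  have e2 : (g + 1 / q) * (g + 1 / (q + 1)) = (q * g + 1) * ((q + 1) * g + 1) / (q * (q + 1)) := by
    field_simp
  rw [e1, e2]
  gcongr

theorem hasDerivAt_sqrt_mul_sq_div {G Φ : ℝ → ℝ} {a b x : ℝ} (hx : 0 < x)
    (hG : HasDerivAt G (Φ x / x) x) (hb : G x + b ≠ 0) :
    HasDerivAt (fun w => √w * ((G w + a) / (G w + b)) ^ 2)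
      ((G x + a) / (G x + b) / (2 * √x) *
        (((G x + a) * (G x + b) - 4 * (a - b) * Φ x) / (G x + b) ^ 2)) x := by
  refine ((Real.hasDerivAt_sqrt hx.ne').mul
    (((hG.add_const a).div (hG.add_const b) hb).pow 2)).congr_deriv ?_
  simp only [Pi.div_apply, Pi.pow_apply]
  generalize G x = g at hb ⊢
  generalize Φ x = φ
  have hs : 0 < √x := Real.sqrt_pos.2 hx
  have hxs : x = √x ^ 2 := (Real.sq_sqrt hx.le).symm
  generalize √x = s at hs hxs ⊢
  subst hxs
  simp only [Nat.add_one_sub_one, pow_one, Nat.cast_ofNat]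
  field_simp
  ring

theorem monotoneOn_sqrt_mul_sq_div {G Φ : ℝ → ℝ} {a b : ℝ} (ha : 0 ≤ a) (hb : 0 < b)
    (hG : ∀ x > 0, HasDerivAt G (Φ x / x) x) (hG₀ : ∀ x > 0, 0 ≤ G x)
    (hΦ : ∀ x > 0, 4 * (a - b) * Φ x ≤ (G x + a) * (G x + b)) :
    MonotoneOn (fun w => √w * ((G w + a) / (G w + b)) ^ 2) (Ioi 0) := by
  have hGb : ∀ x > 0, 0 < G x + b := fun x hx => by linarith [hG₀ x hx]
  have hderiv := fun x (hx : x ∈ Ioi (0 : ℝ)) =>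
    hasDerivAt_sqrt_mul_sq_div (a := a) hx (hG x hx) (hGb x hx).ne'
  refine monotoneOn_of_hasDerivWithinAt_nonneg (convex_Ioi 0)
    (fun x hx => (hderiv x hx).continuousAt.continuousWithinAt)
    (fun x hx => (hderiv x (interior_subset hx)).hasDerivWithinAt) fun x hx => ?_
  rw [interior_Ioi] at hx
  have := hG₀ x hx
  have := hGb x hx
  have : 0 ≤ (G x + a) * (G x + b) - 4 * (a - b) * Φ x := sub_nonneg.2 (hΦ x hx)
  positivity

theorem stmt_12 (p : ℕ) (hp : 3 ≤ p) (Φ : ℝ → ℝ)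
    (hpos : ∀ w > 0, 0 < Φ w) (hcont : ContinuousOn Φ (Set.Ioi 0))
    (hint : ∀ w > 0, IntervalIntegrable (fun t => Φ t / t) volume 0 w)
    (β : ℝ) (hβ : β ≤ (p : ℝ) - 2)
    (hratio : ∀ w > 0, Φ w / (∫ t in (0 : ℝ)..w, Φ t / t) ≤ β) :
    MonotoneOn
      (fun w => Real.sqrt w *
        (((∫ t in (0 : ℝ)..w, Φ t / t) + 1 / ((p : ℝ) - 2)) /
          ((∫ t in (0 : ℝ)..w, Φ t / t) + 1 / ((p : ℝ) - 1))) ^ 2)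
      (Set.Ioi 0) := by
  set G := fun w => ∫ t in (0 : ℝ)..w, Φ t / t
  have hq : 0 < (p : ℝ) - 2 := by
    have : (3 : ℝ) ≤ p := by exact_mod_cast hp
    linarith
  have hG₀ : ∀ x > 0, 0 < G x := fun x hx =>
    intervalIntegral.intervalIntegral_pos_of_pos_on (hint x hx)
      (fun t ht => div_pos (hpos t ht.1) ht.1) hx
  have hΦ : ∀ x > 0, Φ x ≤ ((p : ℝ) - 2) * G x := fun x hx => by
    have := (hratio x hx).trans hβ
    rwa [div_le_iff₀ (hG₀ x hx)] at this
  rw [show (p : ℝ) - 1 = (p - 2) + 1 by ring]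
  exact monotoneOn_sqrt_mul_sq_div (by positivity) (by positivity)
    (fun x hx => hasDerivAt_integral_div_self hcont hx (hint x hx)) (fun x hx => (hG₀ x hx).le)
    fun x hx => four_mul_inv_sub_inv_succ_mul_le hq (hG₀ x hx).le (hΦ x hx)
end

section
/- Let p ≥ 3, b > 0, and φ(w) = (p-2) - b/(log(w+1) + bC) with C > 0 (the shrinkage factor induced by Φ₁(w) = (1/b)·w/(w+1)). Then the difference of unbiased risk estimates satisfies w·(log w)²·(4φ'(w) - (p-2-φ(w))²/w) → 4b - b² as w → ∞. -/
open Filter Topology Real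

/-! With `L w = log (w + 1) + b C` one has `φ' w = b / ((w + 1) L²)` and `p - 2 - φ w = b / L`,
so the expression equals `(log w / L)² (4 b w / (w + 1) - b²)`; both `log w / L` and
`w / (w + 1)` tend to `1`. -/

lemma tendsto_div_add_const_atTop (c : ℝ) :
    Tendsto (fun w : ℝ => w / (w + c)) atTop (𝓝 1) := by
  have h : Tendsto (fun w : ℝ => 1 - c / (w + c)) atTop (𝓝 (1 - 0)) :=
    tendsto_const_nhds.sub
      (tendsto_const_nhds.div_atTop (tendsto_atTop_add_const_right _ c tendsto_id))
  rw [sub_zero] at h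
  refine h.congr' ?_
  filter_upwards [eventually_gt_atTop (-c)] with w hw
  have : w + c ≠ 0 := by linarith
  field_simp
  ring

lemma tendsto_log_add_add_div_log (y c : ℝ) :
    Tendsto (fun w => (log (w + y) + c) / log w) atTop (𝓝 1) := by
  have h : Tendsto (fun w => 1 + (log (w + y) - log w + c) / log w) atTop (𝓝 (1 + 0)) :=
    tendsto_const_nhds.add
      (((tendsto_log_comp_add_sub_log y).add_const c).div_atTop tendsto_log_atTop)
  rw [add_zero] at h
  refine h.congr' ?_
  filter_upwards [eventually_gt_atTop 1] with w hw
  have : log w ≠ 0 := (log_pos hw).ne'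
  field_simp
  ring

lemma tendsto_log_div_log_add_add (y c : ℝ) :
    Tendsto (fun w => log w / (log (w + y) + c)) atTop (𝓝 1) := by
  simpa only [inv_div, inv_one] using (tendsto_log_add_add_div_log y c).inv₀ one_ne_zero

lemma eventually_log_add_add_ne_zero (y c : ℝ) :
    ∀ᶠ w in atTop, log (w + y) + c ≠ 0 :=
  (tendsto_atTop_add_const_right _ c
    (tendsto_log_atTop.comp (tendsto_atTop_add_const_right _ y tendsto_id))).eventually_ne_atTop 0

lemma hasDerivAt_const_sub_div_log_add_add {a b c y w : ℝ} (hw : w + y ≠ 0)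
    (hL : log (w + y) + c ≠ 0) :
    HasDerivAt (fun x => a - b / (log (x + y) + c))
      (b / ((w + y) * (log (w + y) + c) ^ 2)) w := by
  have hlog : HasDerivAt (fun x => log (x + y) + c) (w + y)⁻¹ w :=
    (((hasDerivAt_id w).add_const y).log hw).add_const c |>.congr_deriv (by simp)
  refine (((hasDerivAt_const w b).fun_div hlog hL).const_sub a).congr_deriv ?_
  field_simp
  ring

theorem stmt_13_general (p : ℕ) (b C : ℝ) :
    Tendsto
      (fun w : ℝ => w * (Real.log w) ^ 2 *
        (4 * deriv (fun x => ((p : ℝ) - 2) - b / (Real.log (x + 1) + b * C)) w -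
          (((p : ℝ) - 2) -
            (((p : ℝ) - 2) - b / (Real.log (w + 1) + b * C))) ^ 2 / w))
      atTop (nhds (4 * b - b ^ 2)) := by
  have hlim : Tendsto
      (fun w => (log w / (log (w + 1) + b * C)) ^ 2 * (4 * b * (w / (w + 1)) - b ^ 2))
      atTop (𝓝 (1 ^ 2 * (4 * b * 1 - b ^ 2))) :=
    ((tendsto_log_div_log_add_add 1 (b * C)).pow 2).mul
      ((tendsto_const_nhds.mul (tendsto_div_add_const_atTop 1)).sub tendsto_const_nhds)
  rw [one_pow, one_mul, mul_one] at hlim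
  refine hlim.congr' ?_
  filter_upwards [eventually_gt_atTop 0, eventually_log_add_add_ne_zero 1 (b * C)] with w hw hL
  have hw1 : w + 1 ≠ 0 := by linarith
  rw [(hasDerivAt_const_sub_div_log_add_add hw1 hL).deriv]
  field_simp
  ring

theorem stmt_13 (p : ℕ) (hp : 3 ≤ p) (b C : ℝ) (hb : 0 < b) (hC : 0 < C) :
    Tendsto
      (fun w : ℝ => w * (Real.log w) ^ 2 *
        (4 * deriv (fun x => ((p : ℝ) - 2) - b / (Real.log (x + 1) + b * C)) w -
          (((p : ℝ) - 2) -
            (((p : ℝ) - 2) - b / (Real.log (w + 1) + b * C))) ^ 2 / w))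
      atTop (nhds (4 * b - b ^ 2)) :=
  stmt_13_general p b C
end
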